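/- Let n be a nonzero integer, let f(y) = (8·σ₂(|n|)/(9π|n|³)) · ( q⁰(π|n|y)·K₀(2π|n|y) + q¹(π|n|y)·K₁(2π|n|y) ) with q⁰(z) = (90ζ(3) − n²π⁴ + 9z²ζ(3))/z and q¹(z) = (90ζ(3) − n²π⁴ + 54z²ζ(3))/z², set α = 64·σ₂(|n|)·(n²π⁴ − 90ζ(3)) / (135·|n|^{5/2}·π), and let g(y) = f(y) + α·√y·K_{7/2}(2π|n|y). Then e^{2π|n|y}·g(y) − 4·σ₂(|n|)·|n|^{−5/2}·ζ(3)·√y remains bounded as y → ∞. -/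
import Mathlib


open Real

/-- Riemann zeta function for real arguments `s > 1`, as a sum. -/
noncomputable def zetaR (s : ℝ) : ℝ := ∑' n : ℕ, 1 / ((n : ℝ) + 1) ^ s

/-- Modified Bessel function `K₀`. -/
noncomputable def K0 (x : ℝ) : ℝ := ∫ t in Set.Ioi (0 : ℝ), Real.exp (-x * Real.cosh t)

/-- Modified Bessel function `K₁`. -/
noncomputable def K1 (x : ℝ) : ℝ :=
  ∫ t in Set.Ioi (0 : ℝ), Real.exp (-x * Real.cosh t) * Real.cosh t

/-- Divisor sum `σ₂(m) = ∑_{d ∣ m} d²`. -/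
def sigma2 (m : ℕ) : ℕ := ∑ d ∈ m.divisors, d ^ 2

/-- The coefficient `q⁰`. -/
noncomputable def q0 (n : ℤ) (z : ℝ) : ℝ :=
  (90 * zetaR 3 - (n : ℝ) ^ 2 * π ^ 4 + 9 * z ^ 2 * zetaR 3) / z

/-- The coefficient `q¹`. -/
noncomputable def q1 (n : ℤ) (z : ℝ) : ℝ :=
  (90 * zetaR 3 - (n : ℝ) ^ 2 * π ^ 4 + 54 * z ^ 2 * zetaR 3) / z ^ 2

/-- The particular solution `f̂^P_{n,0}`. -/
noncomputable def fP (n : ℤ) (y : ℝ) : ℝ :=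
  8 * (sigma2 n.natAbs : ℝ) / (9 * π * |(n : ℝ)| ^ 3) *
    (q0 n (π * |(n : ℝ)| * y) * K0 (2 * π * |(n : ℝ)| * y) +
      q1 n (π * |(n : ℝ)| * y) * K1 (2 * π * |(n : ℝ)| * y))


/-- Modified Bessel function `K_{7/2}`. -/
noncomputable def K7half (x : ℝ) : ℝ :=
  Real.sqrt (π / (2 * x)) * (1 + 6 / x + 15 / x ^ 2 + 15 / x ^ 3) * Real.exp (-x)

/-- The homogeneous-solution coefficient `α_{n,0}`. -/
noncomputable def alphaN0 (n : ℤ) : ℝ :=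
  64 * (sigma2 n.natAbs : ℝ) * ((n : ℝ) ^ 2 * π ^ 4 - 90 * zetaR 3) /
    (135 * |(n : ℝ)| ^ ((5 : ℝ) / 2) * π)


open MeasureTheory Set

section AuxLemmas

lemma cosh_quad (t : ℝ) : 1 + t ^ 2 / 2 ≤ Real.cosh t := by
  have h := Real.hasSum_cosh t
  have h2 := sum_le_hasSum (Finset.range 2)
    (fun i _ => div_nonneg ((even_two_mul i).pow_nonneg t) (by positivity)) h
  simpa [Finset.sum_range_succ] using h2

lemma cosh_taylor (t : ℝ) : Real.cosh t - 1 - t ^ 2 / 2 ≤ t ^ 4 * Real.cosh t := by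
  have h := Real.hasSum_cosh t
  have h2 : HasSum (fun n : ℕ => t ^ (2 * (n + 2)) / ((2 * (n + 2)).factorial : ℝ))
      (Real.cosh t - ∑ i ∈ Finset.range 2, t ^ (2 * i) / ((2 * i).factorial : ℝ)) := by
    exact (hasSum_nat_add_iff (f := fun m : ℕ => t ^ (2 * m) / ((2 * m).factorial : ℝ)) 2).mpr
      (by simpa using h)
  have h3 : HasSum (fun n : ℕ => t ^ 4 * (t ^ (2 * n) / ((2 * n).factorial : ℝ)))
      (t ^ 4 * Real.cosh t) := h.mul_left _
  have hle : ∀ n : ℕ, t ^ (2 * (n + 2)) / ((2 * (n + 2)).factorial : ℝ)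
      ≤ t ^ 4 * (t ^ (2 * n) / ((2 * n).factorial : ℝ)) := by
    intro n
    have hp : t ^ (2 * (n + 2)) = t ^ 4 * t ^ (2 * n) := by ring
    rw [hp, mul_div_assoc]
    have h4 : (0:ℝ) ≤ t ^ 4 := by positivity
    have ht2 : (0:ℝ) ≤ t ^ (2 * n) := (even_two_mul n).pow_nonneg t
    apply mul_le_mul_of_nonneg_left _ h4
    apply div_le_div_of_nonneg_left ht2
    · exact_mod_cast Nat.factorial_pos _
    · exact_mod_cast Nat.factorial_le (by omega)
  have h5 := hasSum_le hle h2 h3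
  simp [Finset.sum_range_succ] at h5
  linarith

lemma cosh_le_exp' {t : ℝ} (ht : 0 ≤ t) : Real.cosh t ≤ Real.exp t := by
  rw [Real.cosh_eq]
  have : Real.exp (-t) ≤ Real.exp t := Real.exp_le_exp.mpr (by linarith)
  linarith

lemma t_le_aux {x t : ℝ} (hx : 0 < x) : t ≤ x * t ^ 2 / 4 + 1 / x := by
  have h1 : x * (1 / x) = 1 := by field_simp
  nlinarith [sq_nonneg (x * t - 2), hx, h1, mul_pos hx hx]

lemma exp_sq_aux {v : ℝ} (hv : 0 ≤ v) : v ^ 2 / 4 ≤ Real.exp v := by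
  have h := Real.add_one_le_exp (v / 2)
  have h2 : Real.exp (v/2) * Real.exp (v/2) = Real.exp v := by
    rw [← Real.exp_add]; ring_nf
  nlinarith [Real.exp_pos (v/2)]

lemma intK0 {x : ℝ} (hx : 0 < x) :
    IntegrableOn (fun t => Real.exp (-x * Real.cosh t)) (Set.Ioi (0:ℝ)) := by
  apply Integrable.mono' (g := fun t => Real.exp (-x) * Real.exp (-(x/2) * t ^ 2))
  · exact ((integrable_exp_neg_mul_sq (by positivity : (0:ℝ) < x/2)).const_mul _).integrableOn
  · exact (Continuous.aestronglyMeasurable (by continuity)).restrict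
  · refine Filter.Eventually.of_forall fun t => ?_
    rw [Real.norm_eq_abs, abs_of_pos (Real.exp_pos _), ← Real.exp_add]
    apply Real.exp_le_exp.mpr
    have := cosh_quad t
    nlinarith

lemma intK1 {x : ℝ} (hx : 0 < x) :
    IntegrableOn (fun t => Real.exp (-x * Real.cosh t) * Real.cosh t) (Set.Ioi (0:ℝ)) := by
  apply Integrable.mono' (g := fun t => Real.exp (1/x) * Real.exp (-(x/4) * t ^ 2))
  · exact ((integrable_exp_neg_mul_sq (by positivity : (0:ℝ) < x/4)).const_mul _).integrableOn
  · exact (Continuous.aestronglyMeasurable (by continuity)).restrict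
  · rw [ae_restrict_iff' measurableSet_Ioi]
    refine Filter.Eventually.of_forall fun t ht => ?_
    have ht0 : (0:ℝ) ≤ t := le_of_lt ht
    have hc1 : (0:ℝ) < Real.cosh t := Real.cosh_pos t
    rw [Real.norm_eq_abs, abs_of_pos (by positivity), ← Real.exp_add]
    calc Real.exp (-x * Real.cosh t) * Real.cosh t
        ≤ Real.exp (-x * (1 + t^2/2)) * Real.exp t := by
          apply mul_le_mul _ (cosh_le_exp' ht0) (le_of_lt hc1) (le_of_lt (Real.exp_pos _))
          apply Real.exp_le_exp.mpr
          have := cosh_quad t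
          nlinarith
      _ = Real.exp (-x * (1 + t^2/2) + t) := by rw [← Real.exp_add]
      _ ≤ Real.exp (1/x + -(x/4) * t^2) := by
          apply Real.exp_le_exp.mpr
          have := t_le_aux (t := t) hx
          nlinarith

lemma sqrt_36_div (x : ℝ) (hx : 0 < x) : Real.sqrt (36 / x) = 6 / Real.sqrt x := by
  rw [Real.sqrt_div (by norm_num : (0:ℝ) ≤ 36),
    show (36:ℝ) = 6 ^ 2 by norm_num, Real.sqrt_sq (by norm_num : (0:ℝ) ≤ 6)]

lemma sqrt_16_div (x : ℝ) (hx : 0 < x) : Real.sqrt (16 / x) = 4 / Real.sqrt x := by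
  rw [Real.sqrt_div (by norm_num : (0:ℝ) ≤ 16),
    show (16:ℝ) = 4 ^ 2 by norm_num, Real.sqrt_sq (by norm_num : (0:ℝ) ≤ 4)]

lemma hint_shift {x : ℝ} (hx : 0 < x) :
    IntegrableOn (fun t => Real.exp (-(x * (Real.cosh t - 1)))) (Set.Ioi (0:ℝ)) := by
  have heq : (fun t => Real.exp (-(x * (Real.cosh t - 1))))
      = fun t => Real.exp x * Real.exp (-x * Real.cosh t) := by
    funext t; rw [← Real.exp_add]; ring_nf
  rw [heq]; exact (intK0 hx).const_mul _

lemma hint_shift1 {x : ℝ} (hx : 0 < x) :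
    IntegrableOn (fun t => Real.exp (-(x * (Real.cosh t - 1))) * Real.cosh t) (Set.Ioi (0:ℝ)) := by
  have heq : (fun t => Real.exp (-(x * (Real.cosh t - 1))) * Real.cosh t)
      = fun t => Real.exp x * (Real.exp (-x * Real.cosh t) * Real.cosh t) := by
    funext t; rw [← mul_assoc, ← Real.exp_add]; ring_nf
  rw [heq]; exact (intK1 hx).const_mul _

lemma K0_asymp {x : ℝ} (hx : 1 ≤ x) :
    |Real.exp x * K0 x - Real.sqrt (π / (2 * x))| ≤ 3000 / (x * Real.sqrt x) := by
  have hx0 : (0:ℝ) < x := by linarith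
  have h1 : Real.exp x * K0 x = ∫ t in Set.Ioi (0:ℝ), Real.exp (-(x * (Real.cosh t - 1))) := by
    rw [K0, ← integral_const_mul]
    congr 1; funext t; rw [← Real.exp_add]; ring_nf
  have h2 : Real.sqrt (π / (2 * x)) = ∫ t in Set.Ioi (0:ℝ), Real.exp (-(x / 2) * t ^ 2) := by
    rw [integral_gaussian_Ioi,
      show π / (x / 2) = 4 * (π / (2 * x)) by field_simp; ring,
      Real.sqrt_mul (by norm_num : (0:ℝ) ≤ 4),
      show Real.sqrt 4 = 2 by
        rw [show (4:ℝ) = 2 ^ 2 by norm_num, Real.sqrt_sq (by norm_num : (0:ℝ) ≤ 2)]]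
    ring
  have hint2 : IntegrableOn (fun t => Real.exp (-(x / 2) * t ^ 2)) (Set.Ioi (0:ℝ)) :=
    (integrable_exp_neg_mul_sq (by positivity)).integrableOn
  have hintg : IntegrableOn (fun t : ℝ =>
      256 * Real.exp 1 / x * Real.exp (-(x / 8) * t ^ 2)) (Set.Ioi (0:ℝ)) :=
    ((integrable_exp_neg_mul_sq (by positivity : (0:ℝ) < x / 8)).const_mul _).integrableOn
  rw [h1, h2, ← integral_sub (hint_shift hx0) hint2]
  have key : ∀ t : ℝ, 0 < t →
      ‖Real.exp (-(x * (Real.cosh t - 1))) - Real.exp (-(x / 2) * t ^ 2)‖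
        ≤ 256 * Real.exp 1 / x * Real.exp (-(x / 8) * t ^ 2) := by
    intro t ht
    have ht0 : (0:ℝ) ≤ t := ht.le
    set a := x * (Real.cosh t - 1) with ha
    set b := x / 2 * t ^ 2 with hb
    have hba : b ≤ a := by
      have := cosh_quad t; rw [ha, hb]; nlinarith
    have hfg : Real.exp (-a) ≤ Real.exp (-b) := Real.exp_le_exp.mpr (by linarith)
    have hnorm : ‖Real.exp (-a) - Real.exp (-(x / 2) * t ^ 2)‖
        = Real.exp (-b) - Real.exp (-a) := by
      rw [show -(x / 2) * t ^ 2 = -b by rw [hb]; ring, Real.norm_eq_abs,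
        abs_of_nonpos (by linarith)]
      ring
    rw [hnorm]
    -- step A : exp(-b) - exp(-a) ≤ (a - b) * exp(-b)
    have hA : Real.exp (-b) - Real.exp (-a) ≤ (a - b) * Real.exp (-b) := by
      have h := Real.add_one_le_exp (-(a - b))
      have heq : Real.exp (-a) = Real.exp (-(a - b)) * Real.exp (-b) := by
        rw [← Real.exp_add]; ring_nf
      nlinarith [Real.exp_pos (-b)]
    -- step B : a - b ≤ x * t^4 * exp t
    have hB : a - b ≤ x * t ^ 4 * Real.exp t := by
      have h3 := cosh_taylor t
      have h4 := cosh_le_exp' ht0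
      have h5 : t ^ 4 * Real.cosh t ≤ t ^ 4 * Real.exp t :=
        mul_le_mul_of_nonneg_left h4 (by positivity)
      rw [ha, hb]; nlinarith
    -- step C : t^4 ≤ 256 / x^2 * exp ((x/8) * t^2)
    have hC : t ^ 4 ≤ 256 / x ^ 2 * Real.exp (x / 8 * t ^ 2) := by
      have h6 := exp_sq_aux (v := x / 8 * t ^ 2) (by positivity)
      have hx2 : (0:ℝ) < x ^ 2 := by positivity
      rw [div_mul_eq_mul_div, le_div_iff₀ hx2]
      nlinarith
    -- step D : t - b ≤ 1 - (x/4) * t^2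
    have hD : t - b ≤ 1 - x / 4 * t ^ 2 := by
      have h7 := t_le_aux (t := t) hx0
      have h8 : 1 / x ≤ 1 := by
        rw [div_le_one hx0]; exact hx
      rw [hb]; nlinarith
    calc Real.exp (-b) - Real.exp (-a) ≤ (a - b) * Real.exp (-b) := hA
      _ ≤ x * t ^ 4 * Real.exp t * Real.exp (-b) :=
          mul_le_mul_of_nonneg_right hB (Real.exp_pos _).le
      _ = x * t ^ 4 * Real.exp (t - b) := by rw [mul_assoc, ← Real.exp_add]; ring_nf
      _ ≤ x * (256 / x ^ 2 * Real.exp (x / 8 * t ^ 2)) * Real.exp (1 - x / 4 * t ^ 2) := by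
          apply mul_le_mul
          · exact mul_le_mul_of_nonneg_left hC hx0.le
          · exact Real.exp_le_exp.mpr hD
          · exact (Real.exp_pos _).le
          · positivity
      _ = 256 * Real.exp 1 / x * Real.exp (-(x / 8) * t ^ 2) := by
          have hxne : x ≠ 0 := ne_of_gt hx0
          have hcomb : Real.exp (x / 8 * t ^ 2) * Real.exp (1 - x / 4 * t ^ 2)
              = Real.exp 1 * Real.exp (-(x / 8) * t ^ 2) := by
            rw [← Real.exp_add, ← Real.exp_add]; congr 1; ring
          have hgoal : ∀ E1 E2 : ℝ, x * (256 / x ^ 2 * (E1 * E2)) = 256 * E1 / x * E2 := by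
            intro E1 E2; field_simp
          rw [mul_assoc, mul_assoc (256 / x ^ 2), hcomb]
          exact hgoal _ _
  calc |∫ t in Set.Ioi (0:ℝ),
        (Real.exp (-(x * (Real.cosh t - 1))) - Real.exp (-(x / 2) * t ^ 2))|
      ≤ ∫ t in Set.Ioi (0:ℝ), 256 * Real.exp 1 / x * Real.exp (-(x / 8) * t ^ 2) := by
        rw [← Real.norm_eq_abs]
        apply norm_integral_le_of_norm_le hintg
        rw [ae_restrict_iff' measurableSet_Ioi]
        exact Filter.Eventually.of_forall fun t ht => key t ht
    _ = 256 * Real.exp 1 / x * (Real.sqrt (π / (x / 8)) / 2) := by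
        rw [integral_const_mul, integral_gaussian_Ioi]
    _ ≤ 256 * 3 / x * (6 / Real.sqrt x / 2) := by
        have he : Real.exp 1 ≤ 3 := by
          have := Real.exp_one_lt_d9; linarith
        have hs : Real.sqrt (π / (x / 8)) ≤ 6 / Real.sqrt x := by
          rw [← sqrt_36_div x hx0]
          apply Real.sqrt_le_sqrt
          rw [div_div_eq_mul_div]
          apply (div_le_div_iff_of_pos_right hx0).mpr
          nlinarith [Real.pi_le_four]
        have hsx : (0:ℝ) < Real.sqrt x := Real.sqrt_pos.mpr hx0
        gcongr
    _ ≤ 3000 / (x * Real.sqrt x) := by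
        have hsx : (0:ℝ) < Real.sqrt x := Real.sqrt_pos.mpr hx0
        have heq : 256 * 3 / x * (6 / Real.sqrt x / 2) = 2304 / (x * Real.sqrt x) := by
          field_simp; ring
        rw [heq]
        apply (div_le_div_iff_of_pos_right (by positivity)).mpr
        norm_num

lemma K1_nonneg {x : ℝ} (hx : 0 < x) : 0 ≤ K1 x := by
  rw [K1]
  apply setIntegral_nonneg measurableSet_Ioi
  intro t _
  positivity

lemma K1_asymp {x : ℝ} (hx : 1 ≤ x) : Real.exp x * K1 x ≤ 6 / Real.sqrt x := by
  have hx0 : (0:ℝ) < x := by linarith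
  have h1 : Real.exp x * K1 x
      = ∫ t in Set.Ioi (0:ℝ), Real.exp (-(x * (Real.cosh t - 1))) * Real.cosh t := by
    rw [K1, ← integral_const_mul]
    congr 1; funext t
    rw [← mul_assoc, ← Real.exp_add]; ring_nf
  rw [h1]
  have hintg : IntegrableOn (fun t : ℝ => Real.exp 1 * Real.exp (-(x / 4) * t ^ 2))
      (Set.Ioi (0:ℝ)) :=
    ((integrable_exp_neg_mul_sq (by positivity : (0:ℝ) < x / 4)).const_mul _).integrableOn
  calc (∫ t in Set.Ioi (0:ℝ), Real.exp (-(x * (Real.cosh t - 1))) * Real.cosh t)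
      ≤ ∫ t in Set.Ioi (0:ℝ), Real.exp 1 * Real.exp (-(x / 4) * t ^ 2) := by
        apply setIntegral_mono_on (hint_shift1 hx0) hintg measurableSet_Ioi
        intro t ht
        have ht0 : (0:ℝ) ≤ t := le_of_lt ht
        have h2 : 1 / x ≤ 1 := by rw [div_le_one hx0]; exact hx
        calc Real.exp (-(x * (Real.cosh t - 1))) * Real.cosh t
            ≤ Real.exp (-(x / 2) * t ^ 2) * Real.exp t := by
              apply mul_le_mul _ (cosh_le_exp' ht0) (Real.cosh_pos t).le (Real.exp_pos _).le
              apply Real.exp_le_exp.mpr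
              have := cosh_quad t
              nlinarith
          _ = Real.exp (t - x / 2 * t ^ 2) := by rw [← Real.exp_add]; congr 1; ring
          _ ≤ Real.exp (1 + -(x / 4) * t ^ 2) := by
              apply Real.exp_le_exp.mpr
              have := t_le_aux (t := t) hx0
              nlinarith
          _ = Real.exp 1 * Real.exp (-(x / 4) * t ^ 2) := Real.exp_add _ _
    _ = Real.exp 1 * (Real.sqrt (π / (x / 4)) / 2) := by
        rw [integral_const_mul, integral_gaussian_Ioi]
    _ ≤ 3 * (4 / Real.sqrt x / 2) := by
        have he : Real.exp 1 ≤ 3 := by have := Real.exp_one_lt_d9; linarith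
        have hs : Real.sqrt (π / (x / 4)) ≤ 4 / Real.sqrt x := by
          rw [← sqrt_16_div x hx0]
          apply Real.sqrt_le_sqrt
          rw [div_div_eq_mul_div]
          apply (div_le_div_iff_of_pos_right hx0).mpr
          nlinarith [Real.pi_le_four]
        gcongr
    _ = 6 / Real.sqrt x := by ring

end AuxLemmas

set_option maxHeartbeats 2000000

/-- large-`y` behaviour of the complete mode `f̂_{n,0}`:
`e^{2π|n|y}·g(y) − 4σ₂(|n|)|n|^{−5/2}ζ(3)√y` stays bounded as `y → ∞`. -/
theorem mode_n0_large_y (n : ℤ) (hn : n ≠ 0) :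
    ∃ C : ℝ, ∀ᶠ y in Filter.atTop,
      |Real.exp (2 * π * |(n : ℝ)| * y) *
          (fP n y + alphaN0 n * Real.sqrt y * K7half (2 * π * |(n : ℝ)| * y)) -
        4 * (sigma2 n.natAbs : ℝ) * |(n : ℝ)| ^ (-(5 : ℝ) / 2) * zetaR 3 * Real.sqrt y| ≤ C := by
  have hζ : 0 ≤ zetaR 3 := tsum_nonneg (fun i => by positivity)
  set N : ℝ := |(n : ℝ)| with hNdef
  have hN1 : (1:ℝ) ≤ N := by
    rw [hNdef, ← Int.cast_abs]
    exact_mod_cast Int.one_le_abs hn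
  have hN0 : (0:ℝ) < N := by linarith only [hN1]
  set σ : ℝ := (sigma2 n.natAbs : ℝ) with hσdef
  have hσ : 0 ≤ σ := Nat.cast_nonneg _
  set A : ℝ := 90 * zetaR 3 - (n : ℝ) ^ 2 * π ^ 4 with hA
  set coef : ℝ := 8 * σ / (9 * π * N ^ 3) with hcoef
  have hcoef0 : 0 ≤ coef := by positivity
  set α : ℝ := alphaN0 n with hα
  refine ⟨coef * |A| + coef * (|A| + 9 * zetaR 3) * 3000 + coef * (|A| + 54 * zetaR 3) * 6
    + |α| * 19, ?_⟩
  filter_upwards [Filter.eventually_ge_atTop (1:ℝ)] with y hy1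
  have hy0 : (0:ℝ) < y := by linarith only [hy1]
  have hπ3 : (3:ℝ) < π := Real.pi_gt_three
  set sy : ℝ := Real.sqrt y with hsydef
  set sn : ℝ := Real.sqrt N with hsndef
  have hsy1 : (1:ℝ) ≤ sy := Real.one_le_sqrt.mpr hy1
  have hsn1 : (1:ℝ) ≤ sn := Real.one_le_sqrt.mpr hN1
  have hsy0 : (0:ℝ) < sy := by linarith only [hsy1]
  have hsn0 : (0:ℝ) < sn := by linarith only [hsn1]
  have hsy2 : sy ^ 2 = y := Real.sq_sqrt hy0.le
  have hsn2 : sn ^ 2 = N := Real.sq_sqrt hN0.le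
  set x : ℝ := 2 * π * N * y with hxdef
  set z : ℝ := π * N * y with hzdef
  have hNy : (1:ℝ) ≤ N * y := by nlinarith only [hN1, hy1]
  have hz1 : (1:ℝ) ≤ z := by
    rw [hzdef, mul_assoc]; nlinarith only [hπ3, hNy]
  have hz0 : (0:ℝ) < z := by linarith only [hz1]
  have hx1 : (1:ℝ) ≤ x := by
    rw [hxdef, mul_assoc, mul_assoc]; nlinarith only [hπ3, hNy]
  have hx0 : (0:ℝ) < x := by linarith only [hx1]
  have hxz : x = 2 * z := by rw [hxdef, hzdef]; ring
  set s : ℝ := Real.sqrt (π / (2 * x)) with hsdef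
  set E0 : ℝ := Real.exp x * K0 x with hE0
  set E1 : ℝ := Real.exp x * K1 x with hE1
  have hd : |E0 - s| ≤ 3000 / (x * Real.sqrt x) := K0_asymp hx1
  have hE1nn : 0 ≤ E1 := mul_nonneg (Real.exp_pos _).le (K1_nonneg hx0)
  have hE1le : E1 ≤ 6 / Real.sqrt x := K1_asymp hx1
  have hs : s = (2 * sn * sy)⁻¹ := by
    have h1 : π / (2 * x) = ((2 * sn * sy) ^ 2)⁻¹ := by
      rw [mul_pow, mul_pow, hsn2, hsy2, hxdef]
      have hNne : N ≠ 0 := ne_of_gt hN0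
      have hyne : y ≠ 0 := ne_of_gt hy0
      field_simp
    rw [hsdef, h1, Real.sqrt_inv, Real.sqrt_sq (by positivity)]
  have hs0 : 0 ≤ s := by rw [hs]; positivity
  have hs1 : s ≤ 1 := by
    rw [hs]
    apply inv_le_one_of_one_le₀
    nlinarith only [hsn1, hsy1]
  have h5half : N ^ ((5:ℝ)/2) = N ^ 2 * sn := by
    have he : ((5:ℝ)/2) = ((2:ℕ) : ℝ) + (1:ℝ)/2 := by norm_num
    rw [he, Real.rpow_add hN0, Real.rpow_natCast, ← Real.sqrt_eq_rpow, ← hsndef]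
  have hrpow : N ^ (-(5:ℝ)/2) = sn / N ^ 3 := by
    rw [show (-(5:ℝ)/2) = -((5:ℝ)/2) by norm_num, Real.rpow_neg hN0.le, h5half,
      inv_eq_one_div, div_eq_div_iff (by positivity) (by positivity)]
    linear_combination (-(N ^ 2)) * hsn2
  have hK0x : K0 x = E0 * (Real.exp x)⁻¹ := by
    rw [hE0]; field_simp
  have hK1x : K1 x = E1 * (Real.exp x)⁻¹ := by
    rw [hE1]; field_simp
  have hK7x : K7half x = s * (1 + 6/x + 15/x^2 + 15/x^3) * (Real.exp x)⁻¹ := by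
    rw [K7half, Real.exp_neg, hsdef]
  have hfP : fP n y = coef * (q0 n z * K0 x + q1 n z * K1 x) := by
    rw [fP, ← hNdef, ← hσdef, ← hzdef, ← hxdef, ← hcoef]
  have key : Real.exp x * (fP n y + α * sy * K7half x) - 4 * σ * N ^ (-(5:ℝ)/2) * zetaR 3 * sy
      = coef * A / z * s + coef * (q0 n z) * (E0 - s) + coef * (q1 n z) * E1
        + α * (1 + 6/x + 15/x^2 + 15/x^3) * (2*sn)⁻¹ := by
    rw [hfP, hK7x, hK0x, hK1x, hrpow]
    simp only [q0, q1]
    rw [hs, hA, hcoef, hzdef, hxdef, ← hsn2, ← hsy2]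
    have hexpne : Real.exp (2*π*(sn^2)*(sy^2)) ≠ 0 := Real.exp_ne_zero _
    have hπ0 : π ≠ 0 := Real.pi_ne_zero
    have hsnne : sn ≠ 0 := ne_of_gt hsn0
    have hsyne : sy ≠ 0 := ne_of_gt hsy0
    field_simp
    ring
  -- bounds for the four terms
  have hAnn : (0:ℝ) ≤ |A| := abs_nonneg A
  have hA9 : (0:ℝ) ≤ |A| + 9 * zetaR 3 := by linarith only [hAnn, hζ]
  have hA54 : (0:ℝ) ≤ |A| + 54 * zetaR 3 := by linarith only [hAnn, hζ]
  have hz2 : (1:ℝ) ≤ z ^ 2 := by nlinarith only [hz1]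
  have hzA : (0:ℝ) ≤ |A| * (z ^ 2 - 1) :=
    mul_nonneg (abs_nonneg A) (by linarith)
  have hq0 : |q0 n z| ≤ (|A| + 9 * zetaR 3) * z := by
    simp only [q0]
    rw [← hA, abs_div, abs_of_pos hz0, div_le_iff₀ hz0]
    have h9 : (0:ℝ) ≤ 9 * z ^ 2 * zetaR 3 :=
      mul_nonneg (by positivity) hζ
    have h1 : |A + 9 * z ^ 2 * zetaR 3| ≤ |A| + 9 * z ^ 2 * zetaR 3 := by
      calc |A + 9 * z ^ 2 * zetaR 3| ≤ |A| + |9 * z ^ 2 * zetaR 3| := abs_add_le _ _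
        _ = |A| + 9 * z ^ 2 * zetaR 3 := by rw [abs_of_nonneg h9]
    linarith only [h1, hzA]
  have hq1 : |q1 n z| ≤ |A| + 54 * zetaR 3 := by
    simp only [q1]
    rw [← hA, abs_div, abs_of_pos (by positivity : (0:ℝ) < z ^ 2),
      div_le_iff₀ (by positivity : (0:ℝ) < z ^ 2)]
    have h9 : (0:ℝ) ≤ 54 * z ^ 2 * zetaR 3 :=
      mul_nonneg (by positivity) hζ
    have h1 : |A + 54 * z ^ 2 * zetaR 3| ≤ |A| + 54 * z ^ 2 * zetaR 3 := by
      calc |A + 54 * z ^ 2 * zetaR 3| ≤ |A| + |54 * z ^ 2 * zetaR 3| := abs_add_le _ _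
        _ = |A| + 54 * z ^ 2 * zetaR 3 := by rw [abs_of_nonneg h9]
    linarith only [h1, hzA]
  have hsqx1 : (1:ℝ) ≤ Real.sqrt x := Real.one_le_sqrt.mpr hx1
  have hT1 : |coef * A / z * s| ≤ coef * |A| := by
    rw [abs_mul, abs_div, abs_mul, abs_of_nonneg hcoef0, abs_of_pos hz0, abs_of_nonneg hs0]
    calc coef * |A| / z * s ≤ coef * |A| / z * 1 :=
          mul_le_mul_of_nonneg_left hs1 (by positivity)
      _ = coef * |A| / z := mul_one _
      _ ≤ coef * |A| := div_le_self (by positivity) hz1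
  have hT2 : |coef * q0 n z * (E0 - s)| ≤ coef * (|A| + 9 * zetaR 3) * 3000 := by
    rw [abs_mul, abs_mul, abs_of_nonneg hcoef0]
    have step1 : coef * |q0 n z| ≤ coef * ((|A| + 9 * zetaR 3) * z) :=
      mul_le_mul_of_nonneg_left hq0 hcoef0
    have hnn1 : (0:ℝ) ≤ coef * ((|A| + 9 * zetaR 3) * z) :=
      mul_nonneg hcoef0 (mul_nonneg hA9 hz0.le)
    have step2 : coef * |q0 n z| * |E0 - s|
        ≤ coef * ((|A| + 9 * zetaR 3) * z) * (3000 / (x * Real.sqrt x)) :=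
      mul_le_mul step1 hd (abs_nonneg _) hnn1
    have h2 : z / (x * Real.sqrt x) ≤ 1 := by
      rw [div_le_one (by positivity)]
      nlinarith only [hxz, hsqx1, hx0, hz0, hz1]
    calc coef * |q0 n z| * |E0 - s|
        ≤ coef * ((|A| + 9 * zetaR 3) * z) * (3000 / (x * Real.sqrt x)) := step2
      _ = coef * (|A| + 9 * zetaR 3) * 3000 * (z / (x * Real.sqrt x)) := by
          field_simp
      _ ≤ coef * (|A| + 9 * zetaR 3) * 3000 * 1 := by
          apply mul_le_mul_of_nonneg_left h2
          have := mul_nonneg (mul_nonneg hcoef0 hA9) (by norm_num : (0:ℝ) ≤ 3000)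
          linarith only [this]
      _ = coef * (|A| + 9 * zetaR 3) * 3000 := mul_one _
  have hT3 : |coef * q1 n z * E1| ≤ coef * (|A| + 54 * zetaR 3) * 6 := by
    rw [abs_mul, abs_mul, abs_of_nonneg hcoef0, abs_of_nonneg hE1nn]
    have hE16 : E1 ≤ 6 := by
      calc E1 ≤ 6 / Real.sqrt x := hE1le
        _ ≤ 6 := div_le_self (by norm_num) hsqx1
    have step1 : coef * |q1 n z| ≤ coef * (|A| + 54 * zetaR 3) :=
      mul_le_mul_of_nonneg_left hq1 hcoef0
    exact mul_le_mul step1 hE16 hE1nn (mul_nonneg hcoef0 hA54)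
  have hT4 : |α * (1 + 6/x + 15/x^2 + 15/x^3) * (2*sn)⁻¹| ≤ |α| * 19 := by
    have hP0 : (0:ℝ) ≤ 1 + 6/x + 15/x^2 + 15/x^3 := by positivity
    have hx2 : (1:ℝ) ≤ x ^ 2 := by nlinarith only [hx1]
    have hx3 : (1:ℝ) ≤ x ^ 3 := by nlinarith only [hx1, hx2]
    have hP37 : 1 + 6/x + 15/x^2 + 15/x^3 ≤ 37 := by
      have d1 : 6/x ≤ 6 := div_le_self (by norm_num) hx1
      have d2 : 15/x^2 ≤ 15 := div_le_self (by norm_num) hx2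
      have d3 : 15/x^3 ≤ 15 := div_le_self (by norm_num) hx3
      linarith only [d1, d2, d3]
    have hinv : (2*sn)⁻¹ ≤ 1/2 := by
      have h1 := inv_anti₀ (by norm_num : (0:ℝ) < 2)
        (by linarith only [hsn1] : (2:ℝ) ≤ 2*sn)
      linarith only [h1]
    rw [abs_mul, abs_mul, abs_of_nonneg hP0,
      abs_of_nonneg (by positivity : (0:ℝ) ≤ (2*sn)⁻¹)]
    calc |α| * (1 + 6/x + 15/x^2 + 15/x^3) * (2*sn)⁻¹ ≤ |α| * 37 * (1/2) :=
          mul_le_mul (mul_le_mul_of_nonneg_left hP37 (abs_nonneg α)) hinv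
            (by positivity) (by positivity)
      _ ≤ |α| * 19 := by linarith only [abs_nonneg α]
  rw [key]
  have habs1 := abs_add_le (coef * A / z * s + coef * (q0 n z) * (E0 - s) + coef * (q1 n z) * E1)
    (α * (1 + 6/x + 15/x^2 + 15/x^3) * (2*sn)⁻¹)
  have habs2 := abs_add_le (coef * A / z * s + coef * (q0 n z) * (E0 - s)) (coef * (q1 n z) * E1)
  have habs3 := abs_add_le (coef * A / z * s) (coef * (q0 n z) * (E0 - s))
  linarith only [hT1, hT2, hT3, hT4, habs1, habs2, habs3]
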